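/- Let n ≥ 2, let Ω ∈ ℝⁿ be a unit vector, let φ : [−1,1] → ℝ be bounded and measurable, write P := Id − Ω⊗Ω and u_⊥ := u − (u·Ω)Ω, and set C_S := (1/((n−1)(n+1))) ∫_{S^{n−1}} φ(u·Ω)(1 − (u·Ω)²)² dσ(u). Then for all indices i, j, k, l ∈ {1,…,n}: ∫_{S^{n−1}} φ(u·Ω) (u_⊥)_i (u_⊥)_j (u_⊥)_k (u_⊥)_l dσ(u) = C_S ( P_{ij}P_{kl} + P_{ik}P_{jl} + P_{il}P_{jk} ). -/

import Mathlib

open MeasureTheory Metric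
open scoped RealInnerProductSpace

/-- The image of a point of the unit sphere of `ℝⁿ` under a linear isometry. -/
noncomputable def sphereMap {n : ℕ}
    (e : EuclideanSpace ℝ (Fin n) ≃ₗᵢ[ℝ] EuclideanSpace ℝ (Fin n))
    (u : sphere (0 : EuclideanSpace ℝ (Fin n)) 1) :
    sphere (0 : EuclideanSpace ℝ (Fin n)) 1 :=
  ⟨e u, by
    rw [mem_sphere_zero_iff_norm, e.norm_map]
    exact mem_sphere_zero_iff_norm.mp u.2⟩

/-- A measure on the unit sphere of `ℝⁿ` is rotation invariant if it is invariant under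
every linear isometry of `ℝⁿ`. -/
def RotationInvariant {n : ℕ} (σ : Measure (sphere (0 : EuclideanSpace ℝ (Fin n)) 1)) :
    Prop :=
  ∀ e : EuclideanSpace ℝ (Fin n) ≃ₗᵢ[ℝ] EuclideanSpace ℝ (Fin n),
    σ.map (sphereMap e) = σ

/-- The `(i,j)` entry of the orthogonal projection matrix `P = Id − Ω⊗Ω` onto `Ω⊥`. -/
noncomputable def projEntry {n : ℕ} (Ω : EuclideanSpace ℝ (Fin n)) (i j : Fin n) : ℝ :=
  (if i = j then (1 : ℝ) else 0) - Ω i * Ω j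

/-!
The quartic form `x ↦ ∫ φ(u·Ω) ⟨u, x⟩⁴ dσ` is invariant under every isometry fixing `Ω`, and such
isometries (reflections) move any vector of `Ω⊥` to any other of the same norm; so on `Ω⊥` the form
is `κ ‖x‖⁴`. Polarization turns this into `(κ/3) Γ` for the full 4-tensor, since `‖x‖⁴` polarizes
to `Γ/3` of the Gram matrix. Contracting both sides with `P` (i.e. summing over `i = j`, `k = l`)
gives `∫ φ(u·Ω) (1 - (u·Ω)²)² dσ` on the left and `(κ/3)(n - 1)(n + 1)` on the right.
-/

section Polarization

variable {F : Type*} [NormedAddCommGroup F] [InnerProductSpace ℝ F]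

def quarticPolarization (f : F → ℝ) (v : Fin 4 → F) : ℝ :=
  ∑ S : Finset (Fin 4), (-1) ^ S.card * f (∑ i ∈ S, v i)

lemma sum_finset_fin_four_neg_one_pow_mul_sum_pow_four (x : Fin 4 → ℝ) :
    ∑ S : Finset (Fin 4), (-1) ^ S.card * (∑ i ∈ S, x i) ^ 4 = 24 * (x 0 * x 1 * x 2 * x 3) := by
  rw [← Finset.powerset_univ, show (Finset.univ : Finset (Fin 4)) = {0, 1, 2, 3} by decide]
  simp only [Finset.sum_powerset_insert, Finset.sum_insert, Finset.sum_singleton, Finset.sum_empty,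
    Finset.card_insert_of_notMem, Finset.card_singleton, Finset.card_empty, Finset.mem_insert,
    Finset.mem_singleton, Finset.empty_ne_singleton, Fin.reduceEq, or_self, not_false_eq_true,
    insert_empty_eq, show ({3} : Finset (Fin 4)).powerset = {∅, {3}} by decide]
  ring

lemma sum_finset_fin_four_neg_one_pow_mul_sum_sum_sq {g : Fin 4 → Fin 4 → ℝ}
    (hg : ∀ i j, g i j = g j i) :
    ∑ S : Finset (Fin 4), (-1) ^ S.card * (∑ i ∈ S, ∑ j ∈ S, g i j) ^ 2
      = 8 * (g 0 1 * g 2 3 + g 0 2 * g 1 3 + g 0 3 * g 1 2) := by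
  rw [← Finset.powerset_univ, show (Finset.univ : Finset (Fin 4)) = {0, 1, 2, 3} by decide]
  simp only [Finset.sum_powerset_insert, Finset.sum_insert, Finset.sum_singleton, Finset.sum_empty,
    Finset.card_insert_of_notMem, Finset.card_singleton, Finset.card_empty, Finset.mem_insert,
    Finset.mem_singleton, Finset.empty_ne_singleton, Fin.reduceEq, or_self, not_false_eq_true,
    insert_empty_eq, show ({3} : Finset (Fin 4)).powerset = {∅, {3}} by decide]
  rw [hg 1 0, hg 2 0, hg 3 0, hg 2 1, hg 3 1, hg 3 2]
  ring

lemma quarticPolarization_inner_pow_four (u : F) (v : Fin 4 → F) :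
    quarticPolarization (fun x => ⟪u, x⟫ ^ 4) v
      = 24 * (⟪u, v 0⟫ * ⟪u, v 1⟫ * ⟪u, v 2⟫ * ⟪u, v 3⟫) := by
  simp only [quarticPolarization, inner_sum]
  exact sum_finset_fin_four_neg_one_pow_mul_sum_pow_four _

lemma quarticPolarization_norm_pow_four (v : Fin 4 → F) :
    quarticPolarization (fun x => ‖x‖ ^ 4) v
      = 8 * (⟪v 0, v 1⟫ * ⟪v 2, v 3⟫ + ⟪v 0, v 2⟫ * ⟪v 1, v 3⟫ + ⟪v 0, v 3⟫ * ⟪v 1, v 2⟫) := by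
  have hgram (S : Finset (Fin 4)) :
      ‖∑ i ∈ S, v i‖ ^ 4 = (∑ i ∈ S, ∑ j ∈ S, ⟪v i, v j⟫) ^ 2 := by
    simp_rw [← inner_sum, ← sum_inner, real_inner_self_eq_norm_sq]
    ring
  simp only [quarticPolarization, hgram]
  exact sum_finset_fin_four_neg_one_pow_mul_sum_sum_sq fun i j => real_inner_comm _ _

end Polarization

section Reflections

variable {F : Type*} [NormedAddCommGroup F] [InnerProductSpace ℝ F]

theorem exists_linearIsometryEquiv_apply_eq_of_inner_eq_zero {Ω a b : F} (ha : ⟪a, Ω⟫ = 0)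
    (hb : ⟪b, Ω⟫ = 0) (hab : ‖a‖ = ‖b‖) : ∃ e : F ≃ₗᵢ[ℝ] F, e Ω = Ω ∧ e a = b := by
  refine ⟨(ℝ ∙ (a - b))ᗮ.reflection, Submodule.reflection_mem_subspace_eq_self ?_,
    Submodule.reflection_sub hab⟩
  rw [Submodule.mem_orthogonal_singleton_iff_inner_right, inner_sub_left, ha, hb, sub_zero]

theorem exists_norm_eq_one_inner_eq_zero [FiniteDimensional ℝ F]
    (hF : 2 ≤ Module.finrank ℝ F) (Ω : F) : ∃ v : F, ‖v‖ = 1 ∧ ⟪v, Ω⟫ = 0 := by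
  have hK : (ℝ ∙ Ω)ᗮ ≠ ⊥ := by
    intro h
    have hsum := (ℝ ∙ Ω).finrank_add_finrank_orthogonal
    have hle := finrank_span_le_card (R := ℝ) ({Ω} : Set F)
    rw [h, finrank_bot] at hsum
    rw [Set.toFinset_singleton, Finset.card_singleton] at hle
    omega
  obtain ⟨w, hw, hw0⟩ := Submodule.exists_mem_ne_zero_of_ne_bot hK
  refine ⟨‖w‖⁻¹ • w, norm_smul_inv_norm hw0, ?_⟩
  rw [inner_smul_left, real_inner_comm,
    (Submodule.mem_orthogonal_singleton_iff_inner_right).1 hw, mul_zero]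

end Reflections

section Projection

variable {n : ℕ} {Ω : EuclideanSpace ℝ (Fin n)}

local notation "E" => EuclideanSpace ℝ (Fin n)

noncomputable def projColumn (Ω : E) (i : Fin n) : E :=
  EuclideanSpace.single i 1 - Ω i • Ω

theorem inner_projColumn (x : E) (i : Fin n) :
    ⟪x, projColumn Ω i⟫ = x i - ⟪x, Ω⟫ * Ω i := by
  simp [projColumn, inner_sub_right, inner_smul_right, EuclideanSpace.inner_single_right,
    mul_comm]

theorem projColumn_inner_eq_zero (hΩ : ‖Ω‖ = 1) (i : Fin n) : ⟪projColumn Ω i, Ω⟫ = 0 := by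
  rw [real_inner_comm, inner_projColumn, real_inner_self_eq_norm_sq, hΩ]
  ring

theorem inner_projColumn_projColumn (hΩ : ‖Ω‖ = 1) (i j : Fin n) :
    ⟪projColumn Ω i, projColumn Ω j⟫ = projEntry Ω i j := by
  rw [inner_projColumn, projColumn_inner_eq_zero hΩ]
  simp [projColumn, projEntry, eq_comm]

theorem sum_inner_projColumn_sq (hΩ : ‖Ω‖ = 1) (x : E) :
    ∑ i, ⟪x, projColumn Ω i⟫ ^ 2 = ‖x‖ ^ 2 - ⟪x, Ω⟫ ^ 2 := by
  have hx := (EuclideanSpace.real_norm_sq_eq x).symm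
  have hΩ2 : ∑ i, Ω i ^ 2 = 1 := by rw [← EuclideanSpace.real_norm_sq_eq, hΩ, one_pow]
  have hxΩ : ∑ i, x i * Ω i = ⟪x, Ω⟫ := by simp [PiLp.inner_apply, mul_comm]
  simp only [inner_projColumn, sub_sq, Finset.sum_add_distrib, Finset.sum_sub_distrib]
  simp only [mul_pow, ← Finset.mul_sum, hx, hΩ2]
  rw [show ∑ i, 2 * x i * (⟪x, Ω⟫ * Ω i) = 2 * ⟪x, Ω⟫ * ∑ i, x i * Ω i by
    rw [Finset.mul_sum]; exact Finset.sum_congr rfl fun i _ => by ring, hxΩ]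
  ring

theorem sum_projEntry_self (hΩ : ‖Ω‖ = 1) : ∑ i, projEntry Ω i i = (n : ℝ) - 1 := by
  simp [projEntry, Finset.sum_sub_distrib, ← sq, ← EuclideanSpace.real_norm_sq_eq, hΩ]

theorem sum_sum_projEntry_sq (hΩ : ‖Ω‖ = 1) : ∑ i, ∑ j, projEntry Ω i j ^ 2 = (n : ℝ) - 1 := by
  have hrow (i : Fin n) : ∑ j, projEntry Ω i j ^ 2 = projEntry Ω i i := by
    have h := sum_inner_projColumn_sq hΩ (projColumn Ω i)
    rw [projColumn_inner_eq_zero hΩ, ← real_inner_self_eq_norm_sq,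
      inner_projColumn_projColumn hΩ] at h
    simpa [inner_projColumn_projColumn hΩ] using h
  simp only [hrow, sum_projEntry_self hΩ]

theorem sum_sum_projEntry_contraction (hΩ : ‖Ω‖ = 1) :
    ∑ i, ∑ j, (projEntry Ω i i * projEntry Ω j j + projEntry Ω i j * projEntry Ω i j
      + projEntry Ω i j * projEntry Ω i j) = ((n : ℝ) - 1) * ((n : ℝ) + 1) := by
  have h := sum_sum_projEntry_sq hΩ
  simp only [Finset.sum_add_distrib, ← Finset.mul_sum, ← Finset.sum_mul, ← sq,
    sum_projEntry_self hΩ, h]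
  ring

end Projection

section SphereMoments

variable {n : ℕ} {σ : Measure (sphere (0 : EuclideanSpace ℝ (Fin n)) 1)}

local notation "E" => EuclideanSpace ℝ (Fin n)

theorem RotationInvariant.integral_comp (hinv : RotationInvariant σ) (e : E ≃ₗᵢ[ℝ] E)
    {f : E → ℝ} (hf : Measurable f) :
    ∫ u, f (e u) ∂σ = ∫ u, f u ∂σ := by
  have hc : Continuous (sphereMap e) := (e.continuous.comp continuous_subtype_val).subtype_mk _
  have hm : AEStronglyMeasurable (fun u : sphere (0 : E) 1 => f u) (σ.map (sphereMap e)) :=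
    (hf.comp measurable_subtype_coe).aestronglyMeasurable
  conv_rhs => rw [← hinv e, integral_map hc.aemeasurable hm]
  rfl

theorem integrable_weight_mul [IsFiniteMeasure σ] {φ : ℝ → ℝ} (hφ : Measurable φ) {C : ℝ}
    (hbdd : ∀ s ∈ Set.Icc (-1 : ℝ) 1, |φ s| ≤ C) {Ω : E} (hΩ : ‖Ω‖ ≤ 1) {g : E → ℝ}
    (hg : Continuous g) :
    Integrable (fun u : sphere (0 : E) 1 => φ ⟪(u : E), Ω⟫ * g u) σ := by
  have hgi : Integrable (fun u : sphere (0 : E) 1 => g u) σ :=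
    (BoundedContinuousFunction.mkOfCompact ⟨_, hg.comp continuous_subtype_val⟩).integrable σ
  refine hgi.bdd_mul (c := C)
    (hφ.comp (continuous_subtype_val.inner continuous_const).measurable).aestronglyMeasurable
    (Filter.Eventually.of_forall fun u => ?_)
  have hu : ‖(u : E)‖ = 1 := mem_sphere_zero_iff_norm.mp u.2
  have hs : |⟪(u : E), Ω⟫| ≤ 1 :=
    (abs_real_inner_le_norm _ _).trans (by rw [hu, one_mul]; exact hΩ)
  exact hbdd _ (abs_le.mp hs)

/-- At `projColumn Ω i, …, projColumn Ω l` this is the tensor `S_{ijkl}` of the paper. -/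
noncomputable def weightedMoment (σ : Measure (sphere (0 : E) 1)) (φ : ℝ → ℝ) (Ω a b c d : E) :
    ℝ :=
  ∫ u, φ ⟪(u : E), Ω⟫ * (⟪(u : E), a⟫ * ⟪(u : E), b⟫ * ⟪(u : E), c⟫ * ⟪(u : E), d⟫) ∂σ

variable {φ : ℝ → ℝ} {Ω : EuclideanSpace ℝ (Fin n)}

theorem weightedMoment_map (hinv : RotationInvariant σ) (hφ : Measurable φ)
    (e : E ≃ₗᵢ[ℝ] E) (he : e Ω = Ω) (a b c d : E) :
    weightedMoment σ φ Ω (e a) (e b) (e c) (e d) = weightedMoment σ φ Ω a b c d := by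
  have heΩ (x : E) : ⟪e x, Ω⟫ = ⟪x, Ω⟫ := by rw [← e.inner_map_map x Ω, he]
  unfold weightedMoment
  rw [← hinv.integral_comp e (f := fun x => φ ⟪x, Ω⟫ * (⟪x, e a⟫ * ⟪x, e b⟫ * ⟪x, e c⟫ * ⟪x, e d⟫))
    (by fun_prop)]
  simp only [heΩ, LinearIsometryEquiv.inner_map_map]

theorem weightedMoment_smul (t : ℝ) (a : E) :
    weightedMoment σ φ Ω (t • a) (t • a) (t • a) (t • a)
      = t ^ 4 * weightedMoment σ φ Ω a a a a := by
  unfold weightedMoment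
  rw [← integral_const_mul]
  congr 1 with u
  simp only [inner_smul_right]
  ring

theorem weightedMoment_diag_eq (hinv : RotationInvariant σ) (hφ : Measurable φ) {v a : E}
    (hv : ‖v‖ = 1) (hvΩ : ⟪v, Ω⟫ = 0) (haΩ : ⟪a, Ω⟫ = 0) :
    weightedMoment σ φ Ω a a a a = weightedMoment σ φ Ω v v v v * ‖a‖ ^ 4 := by
  obtain ⟨e, heΩ, hea⟩ := exists_linearIsometryEquiv_apply_eq_of_inner_eq_zero
    (a := ‖a‖ • v) (by rw [inner_smul_left, hvΩ, mul_zero]) haΩ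
    (by rw [norm_smul, hv, mul_one, norm_norm])
  calc weightedMoment σ φ Ω a a a a
      = weightedMoment σ φ Ω (e (‖a‖ • v)) (e (‖a‖ • v)) (e (‖a‖ • v)) (e (‖a‖ • v)) := by
        rw [hea]
    _ = weightedMoment σ φ Ω v v v v * ‖a‖ ^ 4 := by
        rw [weightedMoment_map hinv hφ e heΩ, weightedMoment_smul, mul_comm]

theorem weightedMoment_eq_quarticPolarization [IsFiniteMeasure σ] (hφ : Measurable φ) {C : ℝ}
    (hbdd : ∀ s ∈ Set.Icc (-1 : ℝ) 1, |φ s| ≤ C) (hΩ : ‖Ω‖ ≤ 1) (v : Fin 4 → E) :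
    24 * weightedMoment σ φ Ω (v 0) (v 1) (v 2) (v 3)
      = quarticPolarization (fun x => weightedMoment σ φ Ω x x x x) v := by
  have hint (x : E) : Integrable (fun u : sphere (0 : E) 1 =>
      φ ⟪(u : E), Ω⟫ * (⟪(u : E), x⟫ * ⟪(u : E), x⟫ * ⟪(u : E), x⟫ * ⟪(u : E), x⟫)) σ :=
    integrable_weight_mul hφ hbdd hΩ (g := fun y => ⟪y, x⟫ * ⟪y, x⟫ * ⟪y, x⟫ * ⟪y, x⟫)
      (by fun_prop)
  simp only [weightedMoment, quarticPolarization, ← integral_const_mul]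
  rw [← integral_finsetSum _ fun S _ => (hint _).const_mul _]
  congr 1 with u
  have hpol := quarticPolarization_inner_pow_four (u : E) v
  simp only [quarticPolarization] at hpol
  rw [← mul_assoc, mul_comm 24, mul_assoc, ← hpol, Finset.mul_sum]
  congr 1 with S
  ring

theorem weightedMoment_eq_gram [IsFiniteMeasure σ] (hinv : RotationInvariant σ)
    (hφ : Measurable φ) {C : ℝ} (hbdd : ∀ s ∈ Set.Icc (-1 : ℝ) 1, |φ s| ≤ C) (hΩ : ‖Ω‖ ≤ 1)
    {v : E} (hv : ‖v‖ = 1) (hvΩ : ⟪v, Ω⟫ = 0) {a b c d : E} (ha : ⟪a, Ω⟫ = 0)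
    (hb : ⟪b, Ω⟫ = 0) (hc : ⟪c, Ω⟫ = 0) (hd : ⟪d, Ω⟫ = 0) :
    3 * weightedMoment σ φ Ω a b c d
      = weightedMoment σ φ Ω v v v v * (⟪a, b⟫ * ⟪c, d⟫ + ⟪a, c⟫ * ⟪b, d⟫ + ⟪a, d⟫ * ⟪b, c⟫) := by
  have horth : ∀ i, ⟪![a, b, c, d] i, Ω⟫ = 0 := by
    intro i; fin_cases i <;> assumption
  have h24 := weightedMoment_eq_quarticPolarization (σ := σ) hφ hbdd hΩ ![a, b, c, d]
  have hdiag : quarticPolarization (fun x => weightedMoment σ φ Ω x x x x) ![a, b, c, d]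
      = weightedMoment σ φ Ω v v v v * quarticPolarization (fun x => ‖x‖ ^ 4) ![a, b, c, d] := by
    simp only [quarticPolarization, Finset.mul_sum]
    refine Finset.sum_congr rfl fun S _ => ?_
    have hS : ⟪∑ i ∈ S, ![a, b, c, d] i, Ω⟫ = 0 := by
      rw [sum_inner]
      exact Finset.sum_eq_zero fun i _ => horth i
    rw [weightedMoment_diag_eq hinv hφ hv hvΩ hS]
    ring
  rw [hdiag, quarticPolarization_norm_pow_four] at h24
  simp only [Matrix.cons_val] at h24
  linarith

theorem sum_sum_weightedMoment_projColumn [IsFiniteMeasure σ] (hφ : Measurable φ) {C : ℝ}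
    (hbdd : ∀ s ∈ Set.Icc (-1 : ℝ) 1, |φ s| ≤ C) (hΩ : ‖Ω‖ = 1) :
    ∑ i, ∑ j, weightedMoment σ φ Ω (projColumn Ω i) (projColumn Ω i) (projColumn Ω j)
        (projColumn Ω j)
      = ∫ u, φ ⟪(u : E), Ω⟫ * (1 - ⟪(u : E), Ω⟫ ^ 2) ^ 2 ∂σ := by
  have hint (i j : Fin n) : Integrable (fun u : sphere (0 : E) 1 => φ ⟪(u : E), Ω⟫ *
      (⟪(u : E), projColumn Ω i⟫ * ⟪(u : E), projColumn Ω i⟫ * ⟪(u : E), projColumn Ω j⟫ *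
        ⟪(u : E), projColumn Ω j⟫)) σ :=
    integrable_weight_mul hφ hbdd hΩ.le (g := fun y => ⟪y, projColumn Ω i⟫ * ⟪y, projColumn Ω i⟫ *
      ⟪y, projColumn Ω j⟫ * ⟪y, projColumn Ω j⟫) (by fun_prop)
  simp only [weightedMoment]
  simp_rw [← integral_finsetSum _ fun j _ => hint _ j]
  rw [← integral_finsetSum _ fun i _ => integrable_finsetSum _ fun j _ => hint i j]
  congr 1 with u
  have hu := sum_inner_projColumn_sq hΩ (u : E)
  rw [mem_sphere_zero_iff_norm.mp u.2, one_pow] at hu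
  rw [← hu, sq, Finset.sum_mul_sum, Finset.mul_sum]
  refine Finset.sum_congr rfl fun i _ => ?_
  rw [Finset.mul_sum]
  refine Finset.sum_congr rfl fun j _ => ?_
  ring

end SphereMoments

/-- Fourth tangential moment identity:
`∫ φ(u·Ω) (u⊥)_i (u⊥)_j (u⊥)_k (u⊥)_l dσ = C_S (P_{ij}P_{kl} + P_{ik}P_{jl} + P_{il}P_{jk})`
with `C_S = (1/((n−1)(n+1))) ∫ φ(u·Ω)(1−(u·Ω)²)² dσ`. -/
theorem integral_weight_fourth_tangential_moment (n : ℕ) (hn : 2 ≤ n)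
    (σ : Measure (sphere (0 : EuclideanSpace ℝ (Fin n)) 1))
    (hprob : IsProbabilityMeasure σ) (hinv : RotationInvariant σ)
    (Ω : EuclideanSpace ℝ (Fin n)) (hΩ : ‖Ω‖ = 1)
    (φ : ℝ → ℝ) (hφ : Measurable φ) (C : ℝ)
    (hbdd : ∀ s ∈ Set.Icc (-1 : ℝ) 1, |φ s| ≤ C) :
    ∀ i j k l : Fin n,
      (∫ u : sphere (0 : EuclideanSpace ℝ (Fin n)) 1,
          φ ⟪(u : EuclideanSpace ℝ (Fin n)), Ω⟫ *
            (((u : EuclideanSpace ℝ (Fin n)) i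
                - ⟪(u : EuclideanSpace ℝ (Fin n)), Ω⟫ * Ω i) *
              ((u : EuclideanSpace ℝ (Fin n)) j
                - ⟪(u : EuclideanSpace ℝ (Fin n)), Ω⟫ * Ω j) *
              ((u : EuclideanSpace ℝ (Fin n)) k
                - ⟪(u : EuclideanSpace ℝ (Fin n)), Ω⟫ * Ω k) *
              ((u : EuclideanSpace ℝ (Fin n)) l
                - ⟪(u : EuclideanSpace ℝ (Fin n)), Ω⟫ * Ω l)) ∂σ)
        = ((1 / (((n : ℝ) - 1) * ((n : ℝ) + 1))) *
            ∫ u : sphere (0 : EuclideanSpace ℝ (Fin n)) 1,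
              φ ⟪(u : EuclideanSpace ℝ (Fin n)), Ω⟫ *
                (1 - ⟪(u : EuclideanSpace ℝ (Fin n)), Ω⟫ ^ 2) ^ 2 ∂σ) *
          (projEntry Ω i j * projEntry Ω k l + projEntry Ω i k * projEntry Ω j l
            + projEntry Ω i l * projEntry Ω j k) := by
  intro i j k l
  obtain ⟨v, hv, hvΩ⟩ := exists_norm_eq_one_inner_eq_zero (by rwa [finrank_euclideanSpace_fin]) Ω
  have hgram (a b c d : Fin n) := weightedMoment_eq_gram hinv hφ hbdd hΩ.le hv hvΩ
    (projColumn_inner_eq_zero hΩ a) (projColumn_inner_eq_zero hΩ b)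
    (projColumn_inner_eq_zero hΩ c) (projColumn_inner_eq_zero hΩ d)
  simp only [inner_projColumn_projColumn hΩ] at hgram
  have htrace : weightedMoment σ φ Ω v v v v * (((n : ℝ) - 1) * ((n : ℝ) + 1))
      = 3 * ∫ u, φ ⟪(u : EuclideanSpace ℝ (Fin n)), Ω⟫ *
        (1 - ⟪(u : EuclideanSpace ℝ (Fin n)), Ω⟫ ^ 2) ^ 2 ∂σ := by
    rw [← sum_sum_projEntry_contraction hΩ, ← sum_sum_weightedMoment_projColumn hφ hbdd hΩ]
    simp only [Finset.mul_sum, hgram]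
  have hN : ((n : ℝ) - 1) * ((n : ℝ) + 1) ≠ 0 := by
    have : (2 : ℝ) ≤ n := by exact_mod_cast hn
    exact mul_ne_zero (by linarith) (by linarith)
  calc _ = weightedMoment σ φ Ω (projColumn Ω i) (projColumn Ω j) (projColumn Ω k)
        (projColumn Ω l) := by simp only [weightedMoment, inner_projColumn]
    _ = _ := by
      rw [one_div, inv_mul_eq_div, div_mul_eq_mul_div, eq_div_iff hN]
      linear_combination (((n : ℝ) - 1) * ((n : ℝ) + 1)) / 3 * hgram i j k l
        + (projEntry Ω i j * projEntry Ω k l + projEntry Ω i k * projEntry Ω j l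
          + projEntry Ω i l * projEntry Ω j k) / 3 * htrace
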